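/- For all q in (1/2, 1) and all z in [1/2, q]: (h'(q)/h'''(q))·(h''(z) - h''(q)) ≤ h(z) - h(q), where h is the binary entropy function. -/

import Mathlib

noncomputable def h (x : ℝ) : ℝ := -x * Real.log x - (1-x) * Real.log (1-x)

/-!
With `c = h'(q)/h'''(q)` the claim says that `F = h - c h''` satisfies `F q ≤ F z`. Since
`F' = h''' (h'/h''' - c)` and `h''' < 0` on `(1/2, 1)`, it suffices that the ratio `h'/h'''`
is antitone there. Writing `s = 2x - 1`, its derivative has the sign of
`s - 2 (log x - log (1 - x)) (s² + x(1 - x))`, which is nonpositive because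
`log x - log (1 - x) = log (1 + s) - log (1 - s) ≥ 2s` (the first term of its power series).
-/

open Real Set

lemma h_eq_binEntropy : h = binEntropy := by
  funext x
  simp only [h, binEntropy, log_inv]
  ring

lemma two_mul_le_log_one_add_sub_log_one_sub {s : ℝ} (hs₀ : 0 ≤ s) (hs₁ : s < 1) :
    2 * s ≤ log (1 + s) - log (1 - s) := by
  have hsum := hasSum_log_sub_log_of_abs_lt_one (abs_lt.2 ⟨by linarith, hs₁⟩)
  simpa using le_hasSum hsum 0 fun k _ => by positivity

lemma two_mul_two_mul_sub_one_le_log_sub_log {x : ℝ} (hx : 1 / 2 ≤ x) (hx₁ : x < 1) :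
    2 * (2 * x - 1) ≤ log x - log (1 - x) := by
  have := two_mul_le_log_one_add_sub_log_one_sub (s := 2 * x - 1) (by linarith) (by linarith)
  rwa [show 1 + (2 * x - 1) = 2 * x by ring, show 1 - (2 * x - 1) = 2 * (1 - x) by ring,
    log_mul two_ne_zero (by linarith), log_mul two_ne_zero (by linarith),
    add_sub_add_left_eq_sub] at this

lemma hasDerivAt_mul_one_sub (x : ℝ) : HasDerivAt (fun y => y * (1 - y)) (1 - 2 * x) x :=
  ((hasDerivAt_id x).fun_mul ((hasDerivAt_id x).const_sub 1)).congr_deriv (by simp; ring)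

lemma hasDerivAt_log_sub_log_one_sub {x : ℝ} (hx₀ : 0 < x) (hx₁ : x < 1) :
    HasDerivAt (fun y => log y - log (1 - y)) (1 / (x * (1 - x))) x := by
  have h₁ : 1 - x ≠ 0 := by linarith
  refine ((hasDerivAt_log hx₀.ne').sub
    ((hasDerivAt_log h₁).comp x ((hasDerivAt_id x).const_sub 1))).congr_deriv ?_
  field_simp
  ring

/-- `h'(x) / h'''(x)`, with `h'(x) = -(log x - log (1 - x))` and `h'''(x) = -(2x - 1)/(x(1 - x))²`. -/
noncomputable def entropyRatio (x : ℝ) : ℝ :=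
  (log x - log (1 - x)) * (x * (1 - x)) ^ 2 / (2 * x - 1)

lemma hasDerivAt_entropyRatio {x : ℝ} (hx : 1 / 2 < x) (hx₁ : x < 1) :
    HasDerivAt entropyRatio
      (x * (1 - x) * ((2 * x - 1) - 2 * (log x - log (1 - x)) * ((2 * x - 1) ^ 2 + x * (1 - x)))
        / (2 * x - 1) ^ 2) x := by
  have hs : 2 * x - 1 ≠ 0 := by linarith
  have hnum := (hasDerivAt_log_sub_log_one_sub (by linarith) hx₁).fun_mul
    ((hasDerivAt_mul_one_sub x).fun_pow 2)
  have hden : HasDerivAt (fun y => 2 * y - 1) 2 x :=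
    ((hasDerivAt_id x).const_mul 2).sub_const 1 |>.congr_deriv (by simp)
  refine (hnum.fun_div hden hs).congr_deriv ?_
  have hw : x * (1 - x) ≠ 0 := mul_ne_zero (by linarith) (by linarith)
  field_simp
  ring

lemma entropyRatio_antitoneOn : AntitoneOn entropyRatio (Ioo (1 / 2) 1) := by
  refine antitoneOn_of_hasDerivWithinAt_nonpos (convex_Ioo _ _)
    (fun x hx => (hasDerivAt_entropyRatio hx.1 hx.2).continuousAt.continuousWithinAt)
    (fun x hx => (hasDerivAt_entropyRatio (interior_subset hx).1
      (interior_subset hx).2).hasDerivWithinAt) ?_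
  intro x hx
  rw [interior_Ioo] at hx
  obtain ⟨hx, hx₁⟩ := hx
  have hlog := two_mul_two_mul_sub_one_le_log_sub_log hx.le hx₁
  have hw : 0 < x * (1 - x) := mul_pos (by linarith) (by linarith)
  have hs : 0 < 2 * x - 1 := by linarith
  -- `4 x (1 - x) = 1 - (2x - 1)²`, so `4 s (s² + x(1 - x)) = s + 3 s³ ≥ s`
  have hkey : 2 * x - 1 ≤ 2 * (log x - log (1 - x)) * ((2 * x - 1) ^ 2 + x * (1 - x)) := by
    nlinarith [mul_le_mul_of_nonneg_right hlog (by positivity : 0 ≤ (2 * x - 1) ^ 2 + x * (1 - x)),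
      pow_pos hs 3]
  exact div_nonpos_of_nonpos_of_nonneg (mul_nonpos_of_nonneg_of_nonpos hw.le (by linarith))
    (sq_nonneg _)

lemma antitoneOn_h_add_div {q c : ℝ} (hq₁ : q < 1)
    (hc : ∀ x ∈ Ioo (1 / 2) q, c ≤ entropyRatio x) :
    AntitoneOn (fun x => h x + c / (x * (1 - x))) (Icc (1 / 2) q) := by
  have hderiv : ∀ x ∈ Icc (1 / 2) q, HasDerivAt (fun x => h x + c / (x * (1 - x)))
      (log (1 - x) - log x + c * (2 * x - 1) / (x * (1 - x)) ^ 2) x := by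
    rintro x ⟨hx, hxq⟩
    have hw : x * (1 - x) ≠ 0 := mul_ne_zero (by linarith) (by linarith)
    rw [h_eq_binEntropy]
    refine ((hasDerivAt_binEntropy (by linarith) (by linarith)).add
      ((hasDerivAt_const x c).fun_div (hasDerivAt_mul_one_sub x) hw)).congr_deriv ?_
    ring
  refine antitoneOn_of_hasDerivWithinAt_nonpos (convex_Icc _ _)
    (fun x hx => (hderiv x hx).continuousAt.continuousWithinAt)
    (fun x hx => (hderiv x (interior_subset hx)).hasDerivWithinAt) ?_
  intro x hx
  rw [interior_Icc] at hx
  obtain ⟨hx, hxq⟩ := hx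
  have hw : 0 < (x * (1 - x)) ^ 2 := by
    have : 0 < x * (1 - x) := mul_pos (by linarith) (by linarith)
    positivity
  have hcx : c * (2 * x - 1) ≤ (log x - log (1 - x)) * (x * (1 - x)) ^ 2 := by
    have := mul_le_mul_of_nonneg_right (hc x ⟨hx, hxq⟩) (by linarith : (0 : ℝ) ≤ 2 * x - 1)
    rwa [entropyRatio, div_mul_cancel₀ _ (by linarith)] at this
  have : c * (2 * x - 1) / (x * (1 - x)) ^ 2 ≤ log x - log (1 - x) := by
    rwa [div_le_iff₀ hw]
  linarith

theorem entropic_ineq (q : ℝ) (hq : 1/2 < q) (hq1 : q < 1) (z : ℝ)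
    (hz : 1/2 ≤ z) (hzq : z ≤ q) :
    (-Real.log (q/(1-q))) / (-(2*q-1)/(q^2*(1-q)^2)) *
      ((-(1/(z*(1-z)))) - (-(1/(q*(1-q))))) ≤ h z - h q := by
  have hratio : (-log (q / (1 - q))) / (-(2 * q - 1) / (q ^ 2 * (1 - q) ^ 2))
      = entropyRatio q := by
    have hs : 2 * q - 1 ≠ 0 := by linarith
    rw [entropyRatio, log_div (by linarith) (by linarith)]
    field_simp
  have hc : ∀ x ∈ Ioo (1 / 2) q, entropyRatio q ≤ entropyRatio x := fun x hx =>
    entropyRatio_antitoneOn ⟨hx.1, hx.2.trans hq1⟩ ⟨hq, hq1⟩ hx.2.le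
  have hF := antitoneOn_h_add_div hq1 hc ⟨hz, hzq⟩ ⟨hq.le, le_rfl⟩ hzq
  rw [hratio]
  linear_combination hF
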